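/- Suppose y : [0, ∞) → ℝ is nonnegative and differentiable with (1/p)·(d/dt)(y(t)^p) + c·y(t)^p ≤ b·y(t)^{p−1} for all t ≥ 0, where p ≥ 2, c > 0, b ≥ 0 constants. Then y(t) ≤ max(y(0), b/c) for all t ≥ 0, and lim sup_{t→∞} y(t) ≤ b/c. -/

import Mathlib

theorem stmt_18 (p c b : ℝ) (hp : 2 ≤ p) (hc : 0 < c) (hb : 0 ≤ b)
    (y : ℝ → ℝ) (hy : ∀ t, 0 ≤ t → 0 ≤ y t)
    (hdiff : Differentiable ℝ y)
    (hineq : ∀ t, 0 ≤ t →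
      (1 / p) * deriv (fun s => y s ^ p) t + c * y t ^ p ≤ b * y t ^ (p - 1)) :
    (∀ t, 0 ≤ t → y t ≤ max (y 0) (b / c)) ∧
    Filter.limsup y Filter.atTop ≤ b / c := by
  have hp0 : (0:ℝ) < p := by linarith
  have hp1 : (1:ℝ) ≤ p := by linarith
  have hbc : 0 ≤ b / c := div_nonneg hb hc.le
  -- derivative inequality for y at points where y > 0
  have hderiv : ∀ t, 0 ≤ t → 0 < y t → deriv y t ≤ b - c * y t := by
    intro t ht hyt
    have hD : HasDerivAt (fun s => y s ^ p) (p * y t ^ (p - 1) * deriv y t) t :=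
      (Real.hasDerivAt_rpow_const (Or.inr hp1)).comp t (hdiff t).hasDerivAt
    have h1 := hineq t ht
    rw [hD.deriv] at h1
    have hsplit : y t ^ p = y t ^ (p - 1) * y t := by
      have := Real.rpow_add hyt (p - 1) 1
      simpa [Real.rpow_one] using this
    rw [hsplit] at h1
    have hpow : 0 < y t ^ (p - 1) := Real.rpow_pos_of_pos hyt _
    have h2 : y t ^ (p - 1) * deriv y t + c * (y t ^ (p - 1) * y t) ≤ b * y t ^ (p - 1) := by
      have : (1 / p) * (p * y t ^ (p - 1) * deriv y t) = y t ^ (p - 1) * deriv y t := by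
        field_simp
      linarith [h1, this.symm.le, this.le]
    nlinarith [h2, hpow, mul_pos hpow hyt]
  -- key maximum principle
  have key : ∀ t₀, 0 ≤ t₀ → ∀ t, t₀ ≤ t → y t ≤ max (y t₀) (b / c) := by
    intro t₀ ht₀ t ht
    by_contra hcon
    push_neg at hcon
    set M := max (y t₀) (b / c) with hM
    have hMbc : b / c ≤ M := le_max_right _ _
    have hM0 : 0 ≤ M := hbc.trans hMbc
    set A : Set ℝ := Set.Icc t₀ t ∩ y ⁻¹' Set.Iic M with hA
    have hA_closed : IsClosed A :=
      isClosed_Icc.inter (isClosed_Iic.preimage hdiff.continuous)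
    have ht₀A : t₀ ∈ A := ⟨⟨le_refl _, ht⟩, show y t₀ ≤ M from le_max_left _ _⟩
    have hA_ne : A.Nonempty := ⟨t₀, ht₀A⟩
    have hA_bdd : BddAbove A := ⟨t, fun s hs => hs.1.2⟩
    set s := sSup A with hs
    have hsA : s ∈ A := hA_closed.csSup_mem hA_ne hA_bdd
    have hst : s < t := by
      rcases lt_or_eq_of_le hsA.1.2 with h | h
      · exact h
      · exact absurd (h ▸ hsA.2) (not_le.mpr hcon)
    have hanti : AntitoneOn y (Set.Icc s t) := by
      apply antitoneOn_of_deriv_nonpos (convex_Icc s t) hdiff.continuous.continuousOn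
        (hdiff.differentiableOn)
      intro u hu
      rw [interior_Icc] at hu
      have huM : M < y u := by
        by_contra hle
        push_neg at hle
        have huA : u ∈ A := ⟨⟨hsA.1.1.trans hu.1.le, hu.2.le⟩, hle⟩
        exact absurd (le_csSup hA_bdd huA) (not_le.mpr hu.1)
      have hu0 : 0 ≤ u := ht₀.trans (hsA.1.1.trans hu.1.le)
      have hyu : 0 < y u := lt_of_le_of_lt hM0 huM
      have := hderiv u hu0 hyu
      have : deriv y u ≤ b - c * y u := this
      have hcy : b ≤ c * y u := by
        have : b / c < y u := lt_of_le_of_lt hMbc huM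
        calc b = c * (b / c) := by field_simp
        _ ≤ c * y u := by nlinarith
      linarith
    have : y t ≤ y s := hanti ⟨le_refl _, hst.le⟩ ⟨hst.le, le_refl _⟩ hst.le
    exact absurd (this.trans hsA.2) (not_le.mpr hcon)
  refine ⟨fun t ht => key 0 le_rfl t ht, ?_⟩
  -- limsup part
  have hev : ∀ ε : ℝ, 0 < ε → ∀ᶠ t in Filter.atTop, y t ≤ b / c + ε := by
    intro ε hε
    by_cases hex : ∃ t₁, 0 ≤ t₁ ∧ y t₁ ≤ b / c + ε
    · obtain ⟨t₁, ht₁, hyt₁⟩ := hex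
      filter_upwards [Filter.eventually_ge_atTop t₁] with t ht
      exact (key t₁ ht₁ t ht).trans (max_le hyt₁ (by linarith))
    · push_neg at hex
      exfalso
      -- y t > b/c + ε for all t ≥ 0, so deriv y ≤ -c*ε on (0,∞)
      have hanti : AntitoneOn (fun t => y t + c * ε * t) (Set.Ici 0) := by
        apply antitoneOn_of_deriv_nonpos (convex_Ici 0)
        · exact (hdiff.continuous.add (continuous_const.mul continuous_id)).continuousOn
        · intro u _
          exact ((hdiff u).add ((differentiable_id.const_mul (c * ε)) u)).differentiableWithinAt
        · intro u hu
          rw [interior_Ici] at hu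
          have hu0 : 0 ≤ u := le_of_lt hu
          have hyu : b / c + ε < y u := hex u hu0
          have hyu0 : 0 < y u := by linarith
          have hd := hderiv u hu0 hyu0
          have hD : HasDerivAt (fun t => y t + c * ε * t) (deriv y u + c * ε) u := by
            have h2 : HasDerivAt (fun t : ℝ => c * ε * t) (c * ε) u := by
              simpa using (hasDerivAt_id u).const_mul (c * ε)
            exact (hdiff u).hasDerivAt.add h2
          rw [hD.deriv]
          have : c * (b / c + ε) ≤ c * y u := by nlinarith
          have hcb : c * (b / c) = b := by field_simp
          nlinarith
      have hcε : 0 < c * ε := mul_pos hc hε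
      obtain ⟨T, hT⟩ : ∃ T : ℝ, T = y 0 / (c * ε) + 1 := ⟨_, rfl⟩
      have hT0 : 0 ≤ T := by
        have h := div_nonneg (hy 0 le_rfl) hcε.le
        rw [hT]; linarith
      have := hanti (Set.self_mem_Ici) hT0 hT0
      -- y T + c ε T ≤ y 0
      have hyT : y T + c * ε * T ≤ y 0 := by simpa using this
      have hcalc : c * ε * T = y 0 + c * ε := by
        rw [hT]
        field_simp
      have : y T < 0 := by linarith
      exact absurd (hy T hT0) (not_le.mpr this)
  have hcobdd : Filter.IsCoboundedUnder (· ≤ ·) Filter.atTop y := by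
    apply Filter.isCoboundedUnder_le_of_eventually_le Filter.atTop (x := (0:ℝ))
    filter_upwards [Filter.eventually_ge_atTop (0:ℝ)] with t ht
    exact hy t ht
  have hls : ∀ ε : ℝ, 0 < ε → Filter.limsup y Filter.atTop ≤ b / c + ε := fun ε hε =>
    Filter.limsup_le_of_le hcobdd (hev ε hε)
  exact le_of_forall_pos_le_add hls
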